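/- arXiv:1804.04247 — 2 statements merged into one kernel-verified Lean document; each statement's English description precedes it below -/
import Mathlib

section
/- The non-overlap configuration distribution μ^σ associated with a finite-volume Gibbs measure with interaction φ is itself a Gibbs measure on Ω(σ) with interaction φ'(ω_b) = φ(ω_b) + φ(σ_b − ω_b); in particular μ^σ is σ-symmetric: μ^σ(ω) = μ^σ(σ − ω) for all ω ∈ Ω(σ). -/
/-- The non-overlap configuration distribution `μ^σ` of a finite-volume Gibbs measure with
interaction `φ` is itself Gibbs on `Ω(σ)` with interaction `φ'(ω_b) = φ(ω_b) + φ(σ_b - ω_b)`;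
in particular it is `σ`-symmetric. -/
theorem stmt_2 (Λ : Type) [Fintype Λ] [DecidableEq Λ] (F : Finset ℤ)
    (B : Finset (Finset Λ)) (φ : Finset Λ → (Λ → ℤ) → ℝ)
    (hloc : ∀ b ∈ B, ∀ ω ω' : Λ → ℤ, (∀ i ∈ b, ω i = ω' i) → φ b ω = φ b ω')
    (σ : Λ → ℤ) :
    let Ωc := Fintype.piFinset fun _ : Λ => F
    let w : (Λ → ℤ) → ℝ := fun ω => Real.exp (∑ b ∈ B, φ b ω)
    let Z := ∑ ω ∈ Ωc, w ω
    let μ : (Λ → ℤ) → ℝ := fun ω => w ω / Z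
    let Ωσ := Ωc.filter fun ω => ∀ i, σ i - ω i ∈ F
    let ρ := ∑ ω ∈ Ωσ, μ ω * μ fun i => σ i - ω i
    let μσ : (Λ → ℤ) → ℝ := fun ω => μ ω * (μ fun i => σ i - ω i) / ρ
    let w' : (Λ → ℤ) → ℝ := fun ω =>
      Real.exp (∑ b ∈ B, (φ b ω + φ b fun i => σ i - ω i))
    let Z' := ∑ ω ∈ Ωσ, w' ω
    Ωσ.Nonempty →
      (∀ ω ∈ Ωσ, μσ ω = w' ω / Z') ∧
      (∀ ω ∈ Ωσ, μσ ω = μσ fun i => σ i - ω i) := by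
  intro Ωc w Z μ Ωσ ρ μσ w' Z' hne
  have hww : ∀ ω : Λ → ℤ, w ω * w (fun i => σ i - ω i) = w' ω := by
    intro ω
    simp only [w, w', ← Real.exp_add, Finset.sum_add_distrib]
  have hZpos : 0 < Z := by
    obtain ⟨ω, hω⟩ := hne
    have hωc : ω ∈ Ωc := (Finset.mem_filter.mp hω).1
    exact Finset.sum_pos' (fun x _ => (Real.exp_pos _).le) ⟨ω, hωc, Real.exp_pos _⟩
  have hρpos : 0 < ρ := by
    obtain ⟨ω, hω⟩ := hne
    refine Finset.sum_pos' (fun x _ => ?_) ⟨ω, hω, ?_⟩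
    · exact mul_nonneg (div_nonneg (Real.exp_pos _).le hZpos.le)
        (div_nonneg (Real.exp_pos _).le hZpos.le)
    · exact mul_pos (div_pos (Real.exp_pos _) hZpos) (div_pos (Real.exp_pos _) hZpos)
  have hZ' : Z' = ρ * Z * Z := by
    simp only [Z', ρ, Finset.sum_mul]
    refine Finset.sum_congr rfl fun ω _ => ?_
    rw [← hww ω]
    simp only [μ]
    field_simp
  constructor
  · intro ω hω
    rw [hZ', ← hww ω]
    simp only [μσ, μ]
    field_simp
  · intro ω hω
    have : (fun i => σ i - (σ i - ω i)) = ω := by funext i; ring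
    simp only [μσ, this, mul_comm]
end

section
/- In the three-spin model, for the RCR of the previous context, the random cluster probability of vertex 1 being connected to vertex 3 by active bonds is zero: the only hyperbond configuration η with both bonds active is (Ω*₁₂, Ω*₂₃), and no spin configuration ω is compatible with it, since Ω*₁₂ requires ω₂ = −1 while Ω*₂₃ requires ω₂ = 1. Consequently P(1 ↔_act 3) = 0 while Cov(ω₁,ω₃) ≠ 0 when J₁₂, J₂₃ > 0. -/
/-!
Both bonds are active only in the hyperbond configuration `(Ω*₁₂, Ω*₂₃)`, and a spin configuration
compatible with it would need `ω₂ = -1` (from `Ω*₁₂`) and `ω₂ = 1` (from `Ω*₂₃`), so it has no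
compatible configurations and `P(1 ↔_act 3) = 0`. On the other hand a direct computation over the
eight spin configurations gives `E[ω₁ω₃] = 0`, `E[ω₁] = 2(1 - e^{J₁₂})/Z` and
`E[ω₃] = 2(e^{J₂₃} - 1)/Z`, so `Cov(ω₁, ω₃) = 4(e^{J₁₂} - 1)(e^{J₂₃} - 1)/Z² ≠ 0`.
-/

open Finset Real

theorem Fintype.sum_piFinset_const_succ {α β : Type*} [DecidableEq α] [AddCommMonoid β] {n : ℕ}
    (s : Finset α) (f : (Fin (n + 1) → α) → β) :
    ∑ x ∈ Fintype.piFinset (fun _ => s), f x =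
      ∑ a ∈ s, ∑ x ∈ Fintype.piFinset (fun _ : Fin n => s), f (Fin.cons a x) := by
  have h := filter_piFinset_eq_map_consEquiv (fun _ : Fin (n + 1) => s) (fun _ => True)
  simp only [filter_true] at h
  rw [h, sum_map, sum_product]
  rfl

theorem Fintype.sum_piFinset_const_fin_three {α β : Type*} [DecidableEq α] [AddCommMonoid β]
    (s : Finset α) (f : (Fin 3 → α) → β) :
    ∑ x ∈ Fintype.piFinset (fun _ => s), f x = ∑ a ∈ s, ∑ b ∈ s, ∑ c ∈ s, f ![a, b, c] := by
  simp only [Fintype.sum_piFinset_const_succ, Fintype.piFinset_of_isEmpty, Fintype.sum_unique]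
  simp only [Subsingleton.elim default ![]]
  rfl

local notation "spinConfigs" => Fintype.piFinset fun _ : Fin 3 => ({-1, 1} : Finset ℤ)

/-- The unnormalised Gibbs weight `μ ω * Z` of the three-spin model. -/
noncomputable def threeSpinWeight (J12 J23 : ℝ) (ω : Fin 3 → ℤ) : ℝ :=
  exp (J12 * (if ω 0 = -1 ∧ ω 1 = -1 then 1 else 0) + J23 * (if ω 1 = 1 ∧ ω 2 = 1 then 1 else 0))

section Moments

variable (J12 J23 : ℝ)

theorem sum_spin_zero_mul_spin_two_mul_threeSpinWeight :
    ∑ ω ∈ spinConfigs, ((ω 0 * ω 2 : ℤ) : ℝ) * threeSpinWeight J12 J23 ω = 0 := by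
  simp [Fintype.sum_piFinset_const_fin_three, threeSpinWeight]
  ring

theorem sum_spin_zero_mul_threeSpinWeight :
    ∑ ω ∈ spinConfigs, ((ω 0 : ℤ) : ℝ) * threeSpinWeight J12 J23 ω = 2 - 2 * exp J12 := by
  simp [Fintype.sum_piFinset_const_fin_three, threeSpinWeight]
  ring

theorem sum_spin_two_mul_threeSpinWeight :
    ∑ ω ∈ spinConfigs, ((ω 2 : ℤ) : ℝ) * threeSpinWeight J12 J23 ω = 2 * exp J23 - 2 := by
  simp [Fintype.sum_piFinset_const_fin_three, threeSpinWeight]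
  ring

end Moments

theorem threeSpin_cov_ne_zero {J12 J23 Z : ℝ} (h12 : J12 ≠ 0) (h23 : J23 ≠ 0) (hZ : Z ≠ 0) :
    (∑ ω ∈ spinConfigs, ((ω 0 * ω 2 : ℤ) : ℝ) * (threeSpinWeight J12 J23 ω / Z))
      - (∑ ω ∈ spinConfigs, ((ω 0 : ℤ) : ℝ) * (threeSpinWeight J12 J23 ω / Z))
        * (∑ ω ∈ spinConfigs, ((ω 2 : ℤ) : ℝ) * (threeSpinWeight J12 J23 ω / Z)) ≠ 0 := by
  simp only [mul_div_assoc', ← sum_div, sum_spin_zero_mul_spin_two_mul_threeSpinWeight,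
    sum_spin_zero_mul_threeSpinWeight, sum_spin_two_mul_threeSpinWeight]
  have hcov : 0 / Z - (2 - 2 * exp J12) / Z * (2 * exp J23 - 2) / Z
      = 4 * (exp J12 - 1) * (exp J23 - 1) / Z ^ 2 := by
    field_simp
    ring
  have he12 : exp J12 - 1 ≠ 0 := sub_ne_zero.2 (exp_eq_one_iff J12 |>.not.2 h12)
  have he23 : exp J23 - 1 ≠ 0 := sub_ne_zero.2 (exp_eq_one_iff J23 |>.not.2 h23)
  rw [hcov]
  exact div_ne_zero (mul_ne_zero (mul_ne_zero four_ne_zero he12) he23) (pow_ne_zero 2 hZ)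

/-- In the three-spin model, no spin configuration is compatible with both bonds being
active, so the random cluster connectivity `P(1 ↔_act 3)` vanishes, while `Cov(ω₁,ω₃) ≠ 0`
for `J₁₂, J₂₃ > 0`. -/
theorem stmt_8 (J12 J23 : ℝ) (hJ12 : 0 < J12) (hJ23 : 0 < J23) :
    let S : Finset ℤ := {-1, 1}
    let Ωc := Fintype.piFinset fun _ : Fin 3 => S
    let Z : ℝ := 2 * (2 + Real.exp J12 + Real.exp J23)
    let μ : (Fin 3 → ℤ) → ℝ := fun ω =>
      Real.exp (J12 * (if ω 0 = -1 ∧ ω 1 = -1 then 1 else 0)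
        + J23 * (if ω 1 = 1 ∧ ω 2 = 1 then 1 else 0)) / Z
    let ν : Bool × Bool → ℝ := fun η =>
      (if η.1 then 1 - Real.exp (-J12) else Real.exp (-J12)) *
        (if η.2 then 1 - Real.exp (-J23) else Real.exp (-J23))
    let compat : (Fin 3 → ℤ) → Bool × Bool → Prop := fun ω η =>
      (η.1 = true → ω 0 = -1 ∧ ω 1 = -1) ∧ (η.2 = true → ω 1 = 1 ∧ ω 2 = 1)
    let count : Bool × Bool → ℝ := fun η =>
      ((Ωc.filter fun ω => compat ω η).card : ℝ)
    let Pact : ℝ := ν (true, true) * count (true, true) / ∑ η : Bool × Bool, ν η * count η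
    let Cov : ℝ := (∑ ω ∈ Ωc, ((ω 0 * ω 2 : ℤ) : ℝ) * μ ω)
      - (∑ ω ∈ Ωc, ((ω 0 : ℤ) : ℝ) * μ ω) * (∑ ω ∈ Ωc, ((ω 2 : ℤ) : ℝ) * μ ω)
    (Ωc.filter fun ω => compat ω (true, true)) = ∅ ∧ Pact = 0 ∧ Cov ≠ 0 := by
  intro S Ωc Z μ ν compat count Pact Cov
  have hempty : (Ωc.filter fun ω => compat ω (true, true)) = ∅ :=
    filter_eq_empty_iff.2 fun ω _ ⟨h12, h23⟩ => by
      have := (h12 rfl).2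
      have := (h23 rfl).1
      omega
  refine ⟨hempty, ?_, ?_⟩
  · simp only [Pact, count, hempty, card_empty, Nat.cast_zero, mul_zero, zero_div]
  · have hZ : Z ≠ 0 := by positivity
    exact threeSpin_cov_ne_zero hJ12.ne' hJ23.ne' hZ
end
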